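/- arXiv:1103.4351 — 2 statements merged into one kernel-verified Lean document; each statement's English description precedes it below -/
import Mathlib

section
/- For n > 3, the stabilizer of any vertex v in Aut(FQ_n) has order at most (n+1)!. -/
/-!
Every automorphism fixing `v` is determined by how it permutes the `n + 1` neighbours of `v`.
Indeed `FQ n` is the Cayley graph of `Z_2^n` with respect to the unit vectors and the all-ones
vector, and for `n > 3` any two distinct generators `s, t` satisfy `s + t = a + b` only for
`{a, b} = {s, t}`. Hence two neighbours `x + s, x + t` of a vertex `x` have exactly the common
neighbours `x` and `x + s + t`, so an automorphism fixing a vertex and its neighbours also fixes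
the neighbours of each neighbour, and by connectedness it is the identity.
-/

/-- The folded hypercube: vertices are elements of `Z_2^n`; two vertices are adjacent
iff they differ in exactly one coordinate or in all `n` coordinates. -/
def FQ (n : ℕ) : SimpleGraph (Fin n → ZMod 2) :=
  SimpleGraph.fromRel (fun x y => (∃ i, y = x + Pi.single i 1) ∨ y = x + 1)

namespace SimpleGraph

variable {V : Type*} {G : SimpleGraph V}

def HasRigidSquares (G : SimpleGraph V) : Prop :=
  ∀ ⦃u w z⦄, G.Adj u w → G.Adj w z → z ≠ u →
    ∃ w', G.Adj u w' ∧ G.Adj w' z ∧ ∀ y, G.Adj w y → G.Adj w' y → y = u ∨ y = z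

def Iso.neighborSetPerm (φ : G ≃g G) {v : V} (hv : φ v = v) : Equiv.Perm (G.neighborSet v) :=
  (φ.mapNeighborSet v).trans (Equiv.setCongr (by rw [hv]))

namespace HasRigidSquares

theorem apply_eq_of_adj_adj (hG : G.HasRigidSquares) (φ : G ≃g G) {u w z : V} (hu : φ u = u)
    (hN : ∀ x, G.Adj u x → φ x = x) (huw : G.Adj u w) (hwz : G.Adj w z) : φ z = z := by
  obtain rfl | hzu := eq_or_ne z u
  · exact hu
  obtain ⟨w', huw', hw'z, hcommon⟩ := hG huw hwz hzu
  have hw : G.Adj w (φ z) := by simpa [hN w huw] using φ.map_adj_iff.mpr hwz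
  have hw' : G.Adj w' (φ z) := by simpa [hN w' huw'] using φ.map_adj_iff.mpr hw'z
  refine (hcommon _ hw hw').resolve_left fun h => hzu (φ.injective ?_)
  rw [h, hu]

theorem eq_refl (hG : G.HasRigidSquares) (hconn : G.Connected) (φ : G ≃g G) {u : V}
    (hu : φ u = u) (hN : ∀ x, G.Adj u x → φ x = x) : φ = Iso.refl := by
  have propagate : ∀ x y, G.Walk x y → (φ y = y ∧ ∀ z, G.Adj y z → φ z = z) →
      φ x = x ∧ ∀ z, G.Adj x z → φ z = z := by
    intro x y p hy
    induction p with
    | nil => exact hy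
    | cons hxx' _ ih =>
      obtain ⟨hx', hN'⟩ := ih hy
      exact ⟨hN' _ hxx'.symm, fun z hz => hG.apply_eq_of_adj_adj φ hx' hN' hxx'.symm hz⟩
  ext x
  exact (propagate x u (hconn.preconnected x u).some ⟨hu, hN⟩).1

theorem neighborSetPerm_injective (hG : G.HasRigidSquares) (hconn : G.Connected) (v : V) :
    Function.Injective fun φ : {φ : G ≃g G // φ v = v} => φ.1.neighborSetPerm φ.2 := by
  rintro ⟨φ, hφ⟩ ⟨ψ, hψ⟩ h
  have hagree : ∀ x, G.Adj v x → φ x = ψ x := fun x hx => by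
    simpa [Iso.neighborSetPerm] using congrArg Subtype.val (Equiv.congr_fun h ⟨x, hx⟩)
  have hrefl := hG.eq_refl hconn (φ.trans ψ.symm) (u := v)
    (by simp [hφ, RelIso.symm_apply_eq, hψ]) (fun x hx => by simp [hagree x hx])
  ext x
  simpa using congrArg ψ (RelIso.ext_iff.mp hrefl x)

theorem card_stabilizer_le [Finite V] (hG : G.HasRigidSquares) (hconn : G.Connected) (v : V) :
    Nat.card {φ : G ≃g G // φ v = v} ≤ (Nat.card (G.neighborSet v)).factorial := by
  rw [← Nat.card_perm]
  exact Nat.card_le_card_of_injective _ (hG.neighborSetPerm_injective hconn v)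

end HasRigidSquares

end SimpleGraph

lemma Fin.exists_ne_ne_ne {n : ℕ} (hn : 3 < n) (i j k : Fin n) :
    ∃ m, m ≠ i ∧ m ≠ j ∧ m ≠ k := by
  obtain ⟨m, -, hm⟩ := Finset.exists_mem_notMem_of_card_lt_card
    (s := {i, j, k}) (t := Finset.univ) (by simpa using Finset.card_le_three.trans_lt hn)
  simp only [Finset.mem_insert, Finset.mem_singleton, not_or] at hm
  exact ⟨m, hm⟩

lemma ZModModule.add_add_cancel {G : Type*} [AddCommGroup G] [Module (ZMod 2) G] (x a : G) :
    x + a + a = x := by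
  rw [← ZModModule.sub_eq_add, add_sub_cancel_right]

namespace FQ

variable {n : ℕ}

def gen : Option (Fin n) → Fin n → ZMod 2
  | none => 1
  | some i => Pi.single i 1

lemma gen_ne_zero (hn : 0 < n) (o : Option (Fin n)) : gen o ≠ 0 := by
  intro h
  cases o with
  | none => simpa [gen] using congrFun h ⟨0, hn⟩
  | some i => simpa [gen] using congrFun h i

lemma eq_or_eq_of_gen_add_gen_eq (hn : 3 < n) {o o' p p' : Option (Fin n)} (hne : o ≠ o')
    (h : gen o + gen p = gen o' + gen p') : p = o ∨ p = o' := by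
  have ev := congrFun h
  rcases o with _ | i <;> rcases o' with _ | j <;> rcases p with _ | k <;> rcases p' with _ | l <;>
    simp_all [gen, Pi.single_apply]
  case none.some.some.none => have := ev k; grind
  case none.some.some.some =>
    obtain ⟨m, hm⟩ := Fin.exists_ne_ne_ne hn j k l
    have := ev m; grind
  case some.none.some.none => have := ev k; grind
  case some.none.some.some =>
    obtain ⟨m, hm⟩ := Fin.exists_ne_ne_ne hn i k l
    have := ev m; grind
  case some.some.none.none => have := congrFun h i; grind
  case some.some.none.some =>
    obtain ⟨m, hm⟩ := Fin.exists_ne_ne_ne hn i j l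
    have := ev m; grind
  case some.some.some.none =>
    obtain ⟨m, hm⟩ := Fin.exists_ne_ne_ne hn i j k
    have := ev m; grind
  case some.some.some.some => have := ev k; have := ev i; grind

lemma adj_add_gen (hn : 0 < n) (x : Fin n → ZMod 2) (o : Option (Fin n)) :
    (FQ n).Adj x (x + gen o) := by
  refine SimpleGraph.fromRel_adj _ _ _ |>.mpr ⟨?_, Or.inl ?_⟩
  · simpa using gen_ne_zero hn o
  · cases o with
    | none => exact Or.inr rfl
    | some i => exact Or.inl ⟨i, rfl⟩

lemma exists_eq_add_gen_of_adj {x y : Fin n → ZMod 2} (h : (FQ n).Adj x y) :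
    ∃ o, y = x + gen o := by
  have flip : ∀ a, x = y + a → y = x + a := fun a h => by rw [h, ZModModule.add_add_cancel]
  obtain ⟨-, (⟨i, hi⟩ | hi) | (⟨i, hi⟩ | hi)⟩ := SimpleGraph.fromRel_adj _ _ _ |>.mp h
  · exact ⟨some i, hi⟩
  · exact ⟨none, hi⟩
  · exact ⟨some i, flip _ hi⟩
  · exact ⟨none, flip _ hi⟩

lemma connected : (FQ n).Connected := by
  have step : ∀ x i a, (FQ n).Reachable x (x + Pi.single i a) := by
    intro x i a
    rcases (by decide : ∀ a : ZMod 2, a = 0 ∨ a = 1) a with rfl | rfl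
    · simp
    · exact (adj_add_gen i.pos x (some i)).reachable
  have partial_sums : ∀ (x : Fin n → ZMod 2) (s : Finset (Fin n)),
      (FQ n).Reachable 0 (∑ i ∈ s, Pi.single i (x i)) := by
    intro x s
    induction s using Finset.induction_on with
    | empty => simp
    | insert j s hj ih =>
      rw [Finset.sum_insert hj, add_comm]
      exact ih.trans (step _ j (x j))
  refine SimpleGraph.connected_iff_exists_forall_reachable _ |>.mpr ⟨0, fun x => ?_⟩
  simpa [Finset.univ_sum_single] using partial_sums x Finset.univ

lemma hasRigidSquares (hn : 3 < n) : (FQ n).HasRigidSquares := by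
  intro u w z huw hwz hzu
  obtain ⟨o, rfl⟩ := exists_eq_add_gen_of_adj huw
  obtain ⟨o', rfl⟩ := exists_eq_add_gen_of_adj hwz
  have hoo' : o ≠ o' := by
    rintro rfl
    exact hzu (ZModModule.add_add_cancel _ _)
  refine ⟨u + gen o', adj_add_gen (by omega) _ _, ?_, fun y hwy hw'y => ?_⟩
  · rw [add_right_comm]
    exact adj_add_gen (by omega) _ _
  obtain ⟨p, rfl⟩ := exists_eq_add_gen_of_adj hwy
  obtain ⟨p', hp'⟩ := exists_eq_add_gen_of_adj hw'y
  have h : gen o + gen p = gen o' + gen p' := by simpa [add_assoc] using hp'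
  rcases eq_or_eq_of_gen_add_gen_eq hn hoo' h with rfl | rfl
  · exact Or.inl (ZModModule.add_add_cancel _ _)
  · exact Or.inr rfl

lemma card_neighborSet_le (v : Fin n → ZMod 2) : Nat.card ((FQ n).neighborSet v) ≤ n + 1 := by
  choose o ho using fun y : (FQ n).neighborSet v => exists_eq_add_gen_of_adj y.2
  have hinj : Function.Injective o := fun y y' h => Subtype.ext (by rw [ho, ho y', h])
  simpa using Nat.card_le_card_of_injective o hinj

end FQ

theorem fq_stabilizer_card_le (n : ℕ) (hn : 3 < n) (v : Fin n → ZMod 2) :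
    Nat.card {φ : FQ n ≃g FQ n // φ v = v} ≤ (n + 1).factorial :=
  ((FQ.hasRigidSquares hn).card_stabilizer_le FQ.connected v).trans
    (Nat.factorial_le (FQ.card_neighborSet_le v))
end

section
/- For n > 3, the stabilizer in Aut(FQ_n) of the zero vertex, restricted to the neighborhood S = {e_1,...,e_n, e_1+...+e_n} of 0, induces the full symmetric group Sym(S) on the n+1 neighbors of 0. -/
noncomputable section

namespace Module.Basis

variable {ι R M : Type*} [Fintype ι] [CommRing R] [AddCommGroup M] [Module R M]
  (b : Basis ι R M)

/-- Over `Z_2` the appended vector `-∑ i, b i` is `∑ i, b i`. -/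
def foldedFamily : Option ι → M := fun o => o.elim (-∑ i, b i) b

theorem sum_foldedFamily : ∑ o, b.foldedFamily o = 0 := by
  simp [foldedFamily, Fintype.sum_option]

theorem foldedFamily_injective [Nontrivial R] (h : 1 < Fintype.card ι) :
    Function.Injective b.foldedFamily := by
  have neg_sum_ne : ∀ j, -∑ i, b i ≠ b j := by
    intro j hj
    obtain ⟨k, hk⟩ := Fintype.exists_ne_of_one_lt_card h j
    have hjk := congrArg (fun v => b.repr v k) hj
    simp [hk.symm] at hjk
  rintro (_ | i) (_ | j) hij
  · rfl
  · exact absurd hij (neg_sum_ne j)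
  · exact absurd hij.symm (neg_sum_ne i)
  · exact congrArg some (b.injective hij)

def foldedMap (π : Equiv.Perm (Option ι)) : M →ₗ[R] M :=
  b.constr R fun i => b.foldedFamily (π (some i))

theorem foldedMap_foldedFamily (π : Equiv.Perm (Option ι)) (o : Option ι) :
    b.foldedMap π (b.foldedFamily o) = b.foldedFamily (π o) := by
  cases o with
  | some i => exact b.constr_basis R _ i
  | none =>
    have hsum := (Equiv.sum_comp π b.foldedFamily).trans b.sum_foldedFamily
    rw [Fintype.sum_option] at hsum
    simpa [foldedFamily, foldedMap] using neg_eq_of_add_eq_zero_left hsum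

theorem foldedMap_mul (π ρ : Equiv.Perm (Option ι)) :
    b.foldedMap (π * ρ) = b.foldedMap π ∘ₗ b.foldedMap ρ :=
  b.ext fun i => by
    change b.foldedMap (π * ρ) (b.foldedFamily (some i)) =
      b.foldedMap π (b.foldedMap ρ (b.foldedFamily (some i)))
    simp only [foldedMap_foldedFamily, Equiv.Perm.mul_apply]

theorem foldedMap_one : b.foldedMap 1 = LinearMap.id :=
  b.ext fun i => b.foldedMap_foldedFamily 1 (some i)

def foldedEquiv (π : Equiv.Perm (Option ι)) : M ≃ₗ[R] M :=
  .ofLinearMap (b.foldedMap π) (b.foldedMap π⁻¹)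
    (by rw [← foldedMap_mul, mul_inv_cancel, foldedMap_one])
    (by rw [← foldedMap_mul, inv_mul_cancel, foldedMap_one])

theorem foldedEquiv_foldedFamily (π : Equiv.Perm (Option ι)) (o : Option ι) :
    b.foldedEquiv π (b.foldedFamily o) = b.foldedFamily (π o) :=
  b.foldedMap_foldedFamily π o

theorem foldedEquiv_mem_range_iff (π : Equiv.Perm (Option ι)) (v : M) :
    b.foldedEquiv π v ∈ Set.range b.foldedFamily ↔ v ∈ Set.range b.foldedFamily := by
  constructor
  · rintro ⟨o, ho⟩
    refine ⟨π.symm o, ?_⟩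
    rw [← (b.foldedEquiv π).injective.eq_iff, foldedEquiv_foldedFamily,
      π.apply_symm_apply, ho]
  · rintro ⟨o, rfl⟩
    exact ⟨π o, (b.foldedEquiv_foldedFamily π o).symm⟩

end Module.Basis

namespace FQ

variable {n : ℕ}

abbrev neighbor (n : ℕ) : Option (Fin n) → Fin n → ZMod 2 :=
  (Pi.basisFun (ZMod 2) (Fin n)).foldedFamily

theorem eq_add_iff_add_eq {x y s : Fin n → ZMod 2} : y = x + s ↔ x + y = s := by
  have add_self (v : Fin n → ZMod 2) : v + v = 0 := funext fun i => CharTwo.add_self_eq_zero (v i)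
  constructor <;> rintro rfl <;> rw [← add_assoc, add_self, zero_add]

theorem range_neighbor :
    Set.range (neighbor n) = {x | (∃ i : Fin n, x = Pi.single i 1) ∨ x = 1} := by
  ext x
  simp only [Set.mem_range, Option.exists, Module.Basis.foldedFamily, Option.elim,
    Pi.basisFun_apply, Finset.univ_sum_single, Set.mem_ofPred_eq]
  rw [show (-fun _ => 1 : Fin n → ZMod 2) = 1 from funext fun _ => ZMod.neg_eq_self_mod_two 1,
    or_comm]
  simp only [eq_comm]

theorem adj_iff (x y : Fin n → ZMod 2) :
    (FQ n).Adj x y ↔ x ≠ y ∧ x + y ∈ Set.range (neighbor n) := by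
  simp only [FQ, SimpleGraph.fromRel_adj, range_neighbor, Set.mem_ofPred_eq, eq_add_iff_add_eq,
    add_comm y x, or_self]

def autOfPerm (π : Equiv.Perm (Option (Fin n))) : FQ n ≃g FQ n where
  toEquiv := ((Pi.basisFun (ZMod 2) (Fin n)).foldedEquiv π).toEquiv
  map_rel_iff' {x y} := by
    simp only [adj_iff, LinearEquiv.coe_toEquiv, ← map_add, Module.Basis.foldedEquiv_mem_range_iff,
      (LinearEquiv.injective _).ne_iff]

theorem autOfPerm_neighbor (π : Equiv.Perm (Option (Fin n))) (o : Option (Fin n)) :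
    autOfPerm π (neighbor n o) = neighbor n (π o) :=
  Module.Basis.foldedEquiv_foldedFamily _ π o

theorem autOfPerm_zero (π : Equiv.Perm (Option (Fin n))) : autOfPerm π 0 = 0 :=
  map_zero ((Pi.basisFun (ZMod 2) (Fin n)).foldedEquiv π)

end FQ

end

theorem fq_stabilizer_induces_full_sym (n : ℕ) (hn : 3 < n)
    (S : Set (Fin n → ZMod 2))
    (hS : S = {x | (∃ i : Fin n, x = Pi.single i 1) ∨ x = 1}) :
    ∀ σ : Equiv.Perm S, ∃ φ : FQ n ≃g FQ n,
      φ 0 = 0 ∧ ∀ (s : Fin n → ZMod 2) (hs : s ∈ S), φ s = σ ⟨s, hs⟩ := by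
  intro σ
  have hinj : Function.Injective (FQ.neighbor n) :=
    (Pi.basisFun (ZMod 2) (Fin n)).foldedFamily_injective (by rw [Fintype.card_fin]; omega)
  let f : Option (Fin n) ≃ S :=
    (Equiv.ofInjective _ hinj).trans (Equiv.setCongr (hS ▸ FQ.range_neighbor))
  refine ⟨FQ.autOfPerm (f.trans (σ.trans f.symm)), FQ.autOfPerm_zero _, fun s hs => ?_⟩
  obtain ⟨o, ho⟩ := f.surjective ⟨s, hs⟩
  obtain rfl : FQ.neighbor n o = s := congrArg Subtype.val ho
  rw [FQ.autOfPerm_neighbor, ← ho]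
  exact congrArg Subtype.val (f.apply_symm_apply (σ (f o)))
end
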